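/- Let λ ∈ ℂ with |λ| = 1, λ ≠ e^{−iσ₊} and λ ≠ e^{−iσ₋}, and let Ψ^L, Ψ^O, Ψ^R : ℤ → ℂ be an eigenvector of the 3-state diagonal quantum walk with one defect with eigenvalue λ, with α = Ψ^L(0), γ = Ψ^O(0), β = Ψ^R(0). Then the measure μ(x) = |Ψ^L(x)|² + |Ψ^O(x)|² + |Ψ^R(x)|² satisfies: μ(x) = (1+|g|²)|α|² + |h|²|γ|² + |i|²|β|² + 2·Re(g·α·conj(h)·conj(γ) + g·α·conj(i)·conj(β) + h·γ·conj(i)·conj(β)) for all x ≥ 1; μ(0) = |α|² + |γ|² + |β|²; and μ(x) = |a|²|α|² + (1+|c|²)|β|² + |b|²|γ|² + 2·Re(a·α·conj(b)·conj(γ) + a·α·conj(c)·conj(β) + b·γ·conj(c)·conj(β)) for all x ≤ −1. -/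

import Mathlib

/-!
Away from the defect each component is shifted one site per step and multiplied by a unimodular
phase, so for `|λ| = 1` each component has constant modulus along each half-line. The stationary
component `Ψᴼ` vanishes off the origin because `λ` differs from its phases `e^{-iσ±}`. Hence
`μ = |Ψᴸ(0)|² + |Ψᴿ(1)|²` on `x ≥ 1` and `μ = |Ψᴸ(-1)|² + |Ψᴿ(0)|²` on `x ≤ -1`, where the defect
coin gives `Ψᴿ(1)` and `Ψᴸ(-1)` as linear combinations of `Ψᴸ(0), Ψᴼ(0), Ψᴿ(0)`.
-/

namespace Int

variable {α : Type*} {f : ℤ → α} {n : ℤ}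

theorem apply_eq_of_forall_apply_add_one_eq (h : ∀ x, n ≤ x → f (x + 1) = f x)
    {x : ℤ} (hx : n ≤ x) : f x = f n := by
  induction x, hx using Int.leInduction with
  | base => rfl
  | succ y hy ih => rw [h y hy, ih]

theorem apply_eq_of_forall_apply_sub_one_eq (h : ∀ x, x ≤ n → f (x - 1) = f x)
    {x : ℤ} (hx : x ≤ n) : f x = f n := by
  induction x, hx using Int.leInductionDown with
  | base => rfl
  | pred y hy ih => rw [h y hy, ih]

end Int

section UnimodularRecursion

variable {𝕜 : Type*} [NormedDivisionRing 𝕜] {l k u v : 𝕜}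

theorem norm_eq_norm_of_mul_eq_mul (hl : ‖l‖ = 1) (hk : ‖k‖ = 1) (h : l * u = k * v) :
    ‖u‖ = ‖v‖ := by
  simpa [hl, hk] using congrArg norm h

variable {ψ : ℤ → 𝕜} {n : ℤ}

theorem norm_eq_of_forall_mul_eq_mul_add_one (hl : ‖l‖ = 1) (hk : ‖k‖ = 1)
    (h : ∀ x, n ≤ x → l * ψ x = k * ψ (x + 1)) {x : ℤ} (hx : n ≤ x) : ‖ψ x‖ = ‖ψ n‖ :=
  Int.apply_eq_of_forall_apply_add_one_eq (f := (‖ψ ·‖))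
    (fun y hy => (norm_eq_norm_of_mul_eq_mul hl hk (h y hy)).symm) hx

theorem norm_eq_of_forall_mul_eq_mul_sub_one (hl : ‖l‖ = 1) (hk : ‖k‖ = 1)
    (h : ∀ x, x ≤ n → l * ψ x = k * ψ (x - 1)) {x : ℤ} (hx : x ≤ n) : ‖ψ x‖ = ‖ψ n‖ :=
  Int.apply_eq_of_forall_apply_sub_one_eq (f := (‖ψ ·‖))
    (fun y hy => (norm_eq_norm_of_mul_eq_mul hl hk (h y hy)).symm) hx

end UnimodularRecursion

open ComplexConjugate in
theorem Complex.norm_mul_add_mul_add_mul_sq (u v w x y z : ℂ) :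
    ‖u * x + v * y + w * z‖ ^ 2 = ‖u‖ ^ 2 * ‖x‖ ^ 2 + ‖v‖ ^ 2 * ‖y‖ ^ 2 + ‖w‖ ^ 2 * ‖z‖ ^ 2
      + 2 * (u * x * conj v * conj y + u * x * conj w * conj z
              + v * y * conj w * conj z).re := by
  simp only [Complex.sq_norm, Complex.normSq_apply, Complex.add_re, Complex.add_im,
    Complex.mul_re, Complex.mul_im, Complex.conj_re, Complex.conj_im]
  ring

theorem three_state_diagonal_defect_stationary_measure_general
    (σp σm : ℝ) (Δp Δm a b c g h i : ℂ)
    (hΔp : ‖Δp‖ = 1) (hΔm : ‖Δm‖ = 1)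
    (lam : ℂ) (hlam : ‖lam‖ = 1)
    (hlamp : lam ≠ Complex.exp (-(Complex.I * (σp : ℂ))))
    (hlamm : lam ≠ Complex.exp (-(Complex.I * (σm : ℂ))))
    (ΨL ΨO ΨR : ℤ → ℂ)
    (hL1 : ∀ x : ℤ, 0 ≤ x →
      lam * ΨL x = Complex.exp (Complex.I * (σp : ℂ)) * ΨL (x + 1))
    (hL2 : ∀ x : ℤ, x ≤ -2 →
      lam * ΨL x = Complex.exp (Complex.I * (σm : ℂ)) * ΨL (x + 1))
    (hL3 : lam * ΨL (-1) = a * ΨL 0 + b * ΨO 0 + c * ΨR 0)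
    (hO1 : ∀ x : ℤ, 1 ≤ x →
      lam * ΨO x = Complex.exp (-(Complex.I * (σp : ℂ))) * ΨO x)
    (hO2 : ∀ x : ℤ, x ≤ -1 →
      lam * ΨO x = Complex.exp (-(Complex.I * (σm : ℂ))) * ΨO x)
    (hR1 : ∀ x : ℤ, 2 ≤ x → lam * ΨR x = Δp * ΨR (x - 1))
    (hR2 : ∀ x : ℤ, x ≤ 0 → lam * ΨR x = Δm * ΨR (x - 1))
    (hR3 : lam * ΨR 1 = g * ΨL 0 + h * ΨO 0 + i * ΨR 0)
    (α γ β : ℂ) (hα : α = ΨL 0) (hγ : γ = ΨO 0) (hβ : β = ΨR 0)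
    (μ : ℤ → ℝ)
    (hμ : ∀ x : ℤ, μ x = ‖ΨL x‖ ^ 2 + ‖ΨO x‖ ^ 2
                          + ‖ΨR x‖ ^ 2) :
    (∀ x : ℤ, 1 ≤ x →
      μ x = (1 + ‖g‖ ^ 2) * ‖α‖ ^ 2
              + ‖h‖ ^ 2 * ‖γ‖ ^ 2
              + ‖i‖ ^ 2 * ‖β‖ ^ 2
              + 2 * (g * α * (starRingEnd ℂ) h * (starRingEnd ℂ) γ
                      + g * α * (starRingEnd ℂ) i * (starRingEnd ℂ) β
                      + h * γ * (starRingEnd ℂ) i * (starRingEnd ℂ) β).re) ∧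
    μ 0 = ‖α‖ ^ 2 + ‖γ‖ ^ 2 + ‖β‖ ^ 2 ∧
    (∀ x : ℤ, x ≤ -1 →
      μ x = ‖a‖ ^ 2 * ‖α‖ ^ 2
              + (1 + ‖c‖ ^ 2) * ‖β‖ ^ 2
              + ‖b‖ ^ 2 * ‖γ‖ ^ 2
              + 2 * (a * α * (starRingEnd ℂ) b * (starRingEnd ℂ) γ
                      + a * α * (starRingEnd ℂ) c * (starRingEnd ℂ) β
                      + b * γ * (starRingEnd ℂ) c * (starRingEnd ℂ) β).re) := by
  subst hα hγ hβ
  have hOp (x : ℤ) (hx : 1 ≤ x) : ΨO x = 0 :=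
    (mul_eq_mul_right_iff.mp (hO1 x hx)).resolve_left hlamp
  have hOm (x : ℤ) (hx : x ≤ -1) : ΨO x = 0 :=
    (mul_eq_mul_right_iff.mp (hO2 x hx)).resolve_left hlamm
  have hLp (x : ℤ) (hx : 0 ≤ x) : ‖ΨL x‖ = ‖ΨL 0‖ :=
    norm_eq_of_forall_mul_eq_mul_add_one hlam (Complex.norm_exp_I_mul_ofReal σp) hL1 hx
  have hRm (x : ℤ) (hx : x ≤ 0) : ‖ΨR x‖ = ‖ΨR 0‖ :=
    norm_eq_of_forall_mul_eq_mul_sub_one hlam hΔm hR2 hx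
  have hRp (x : ℤ) (hx : 1 ≤ x) : ‖ΨR x‖ = ‖g * ΨL 0 + h * ΨO 0 + i * ΨR 0‖ := by
    rw [norm_eq_of_forall_mul_eq_mul_add_one hΔp hlam
      (fun y hy => by simpa using (hR1 (y + 1) (by omega)).symm) hx]
    exact norm_eq_norm_of_mul_eq_mul hlam norm_one (hR3.trans (one_mul _).symm)
  have hLm (x : ℤ) (hx : x ≤ -1) : ‖ΨL x‖ = ‖a * ΨL 0 + b * ΨO 0 + c * ΨR 0‖ := by
    rw [norm_eq_of_forall_mul_eq_mul_sub_one (Complex.norm_exp_I_mul_ofReal σm) hlam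
      (fun y hy => by simpa using (hL2 (y - 1) (by omega)).symm) hx]
    exact norm_eq_norm_of_mul_eq_mul hlam norm_one (hL3.trans (one_mul _).symm)
  refine ⟨fun x hx => ?_, hμ 0, fun x hx => ?_⟩
  · rw [hμ x, hLp x (by omega), hOp x hx, hRp x hx, norm_zero,
      Complex.norm_mul_add_mul_add_mul_sq]
    ring
  · rw [hμ x, hLm x hx, hOm x hx, hRm x (by omega), norm_zero,
      Complex.norm_mul_add_mul_add_mul_sq]
    ring

/-- Theorem 4.1: the stationary measure of the 3-state diagonal QW with one defect. -/
theorem three_state_diagonal_defect_stationary_measure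
    (σp σm : ℝ) (Δp Δm a b c d e f g h i : ℂ)
    (hΔp : ‖Δp‖ = 1) (hΔm : ‖Δm‖ = 1)
    (hU0 : !![a, b, c; d, e, f; g, h, i] ∈ Matrix.unitaryGroup (Fin 3) ℂ)
    (lam : ℂ) (hlam : ‖lam‖ = 1)
    (hlamp : lam ≠ Complex.exp (-(Complex.I * (σp : ℂ))))
    (hlamm : lam ≠ Complex.exp (-(Complex.I * (σm : ℂ))))
    (ΨL ΨO ΨR : ℤ → ℂ)
    (hL1 : ∀ x : ℤ, 0 ≤ x →
      lam * ΨL x = Complex.exp (Complex.I * (σp : ℂ)) * ΨL (x + 1))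
    (hL2 : ∀ x : ℤ, x ≤ -2 →
      lam * ΨL x = Complex.exp (Complex.I * (σm : ℂ)) * ΨL (x + 1))
    (hL3 : lam * ΨL (-1) = a * ΨL 0 + b * ΨO 0 + c * ΨR 0)
    (hO1 : ∀ x : ℤ, 1 ≤ x →
      lam * ΨO x = Complex.exp (-(Complex.I * (σp : ℂ))) * ΨO x)
    (hO2 : ∀ x : ℤ, x ≤ -1 →
      lam * ΨO x = Complex.exp (-(Complex.I * (σm : ℂ))) * ΨO x)
    (hO3 : lam * ΨO 0 = d * ΨL 0 + e * ΨO 0 + f * ΨR 0)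
    (hR1 : ∀ x : ℤ, 2 ≤ x → lam * ΨR x = Δp * ΨR (x - 1))
    (hR2 : ∀ x : ℤ, x ≤ 0 → lam * ΨR x = Δm * ΨR (x - 1))
    (hR3 : lam * ΨR 1 = g * ΨL 0 + h * ΨO 0 + i * ΨR 0)
    (α γ β : ℂ) (hα : α = ΨL 0) (hγ : γ = ΨO 0) (hβ : β = ΨR 0)
    (μ : ℤ → ℝ)
    (hμ : ∀ x : ℤ, μ x = ‖ΨL x‖ ^ 2 + ‖ΨO x‖ ^ 2
                          + ‖ΨR x‖ ^ 2) :
    (∀ x : ℤ, 1 ≤ x →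
      μ x = (1 + ‖g‖ ^ 2) * ‖α‖ ^ 2
              + ‖h‖ ^ 2 * ‖γ‖ ^ 2
              + ‖i‖ ^ 2 * ‖β‖ ^ 2
              + 2 * (g * α * (starRingEnd ℂ) h * (starRingEnd ℂ) γ
                      + g * α * (starRingEnd ℂ) i * (starRingEnd ℂ) β
                      + h * γ * (starRingEnd ℂ) i * (starRingEnd ℂ) β).re) ∧
    μ 0 = ‖α‖ ^ 2 + ‖γ‖ ^ 2 + ‖β‖ ^ 2 ∧
    (∀ x : ℤ, x ≤ -1 →
      μ x = ‖a‖ ^ 2 * ‖α‖ ^ 2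
              + (1 + ‖c‖ ^ 2) * ‖β‖ ^ 2
              + ‖b‖ ^ 2 * ‖γ‖ ^ 2
              + 2 * (a * α * (starRingEnd ℂ) b * (starRingEnd ℂ) γ
                      + a * α * (starRingEnd ℂ) c * (starRingEnd ℂ) β
                      + b * γ * (starRingEnd ℂ) c * (starRingEnd ℂ) β).re) :=
  three_state_diagonal_defect_stationary_measure_general σp σm Δp Δm a b c g h i hΔp hΔm lam hlam
    hlamp hlamm ΨL ΨO ΨR hL1 hL2 hL3 hO1 hO2 hR1 hR2 hR3 α γ β hα hγ hβ μ hμ
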